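/- arXiv:1104.0207 — 6 statements merged into one kernel-verified Lean document; each statement's English description precedes it below -/
import Mathlib

section
/- Let H be an n-dimensional Hilbert space and N a linear contraction on H (‖N‖ ≤ 1) which is nilpotent of order n (N^n = 0, N^(n-1) ≠ 0) and has a cyclic vector. Suppose ε > 0 satisfies ‖Nx‖ ≥ ε‖x‖ for every x orthogonal to ker N. Then there exists an invertible operator X on H such that X N X⁻¹ is the nilpotent Jordan cell of size n (the shift e_k ↦ e_{k+1} for 0 ≤ k ≤ n−2, e_{n−1} ↦ 0 in an orthonormal basis), with ‖X‖ ≤ 1 and ‖X⁻¹‖ ≤ ε^{-2(n-1)}. -/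
/-!
Since `N` is a single nilpotent Jordan block, `(range N)ᗮ = ker N†` is spanned by one unit
vector `u`. On `range N = uᗮ` the adjoint is a contraction bounded below by `ε`, while
`N† u = 0`, so `ε² (‖y‖² - |⟪u, y⟫|²) ≤ ‖N† y‖² ≤ ‖y‖² - |⟪u, y⟫|²`. Telescoping along
`y = (N†)ᵏ h` gives `ε^(2(n-1)) ‖h‖² ≤ ∑_{k<n} |⟪Nᵏ u, h⟫|² ≤ ‖h‖²`, i.e. two-sided bounds for
`T†`, where `T` is the synthesis operator `e_k ↦ Nᵏ u`. Hence `T` is invertible with `‖T‖ ≤ 1`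
and `‖T⁻¹‖ ≤ ε^(-(n-1))`, it intertwines the shift with `N`, and `X = ε^(2(n-1)) T⁻¹` works.
-/

open scoped InnerProductSpace InnerProduct
open Module

section Nilpotent

variable {K V : Type*} [Field K] [AddCommGroup V] [Module K V]

theorem Module.End.linearIndependent_pow_apply {f : End K V} {m : ℕ} {v : V}
    (hm : (f ^ m) v = 0) (hne : ∀ k < m, (f ^ k) v ≠ 0) :
    LinearIndependent K fun k : Fin m => (f ^ (k : ℕ)) v := by
  induction m generalizing v with
  | zero => exact linearIndependent_empty_type
  | succ m ih =>
    have hcons : (fun k : Fin (m + 1) => (f ^ (k : ℕ)) v) =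
        Fin.cons v fun k : Fin m => (f ^ (k : ℕ)) (f v) := by
      ext k
      refine Fin.cases rfl (fun k => ?_) k
      simp [pow_succ]
    have hker : Submodule.span K (Set.range fun k : Fin m => (f ^ (k : ℕ)) (f v)) ≤
        LinearMap.ker (f ^ m) := by
      rw [Submodule.span_le]
      rintro _ ⟨k, rfl⟩
      simp only [SetLike.mem_coe, LinearMap.mem_ker, ← Module.End.mul_apply, ← pow_add,
        ← pow_succ]
      rw [show m + (k + 1) = k + (m + 1) by omega, pow_add, Module.End.mul_apply, hm, map_zero]
    rw [hcons, linearIndependent_finCons]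
    refine ⟨ih ?_ fun k hk => ?_, fun hv => hne m m.lt_succ_self (hker hv)⟩
    · rwa [← Module.End.mul_apply, ← pow_succ]
    · rw [← Module.End.mul_apply, ← pow_succ]
      exact hne (k + 1) (by omega)

theorem Module.End.finrank_range_of_pow_eq_zero [FiniteDimensional K V] {f : End K V} {m : ℕ}
    (hV : finrank K V = m + 1) (hf : f ^ (m + 1) = 0) (hf' : f ^ m ≠ 0) :
    finrank K (LinearMap.range f) = m := by
  obtain ⟨v, hv⟩ : ∃ v, (f ^ m) v ≠ 0 := by
    by_contra! h
    exact hf' (LinearMap.ext h)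
  have hli : LinearIndependent K fun k : Fin m => (f ^ ((k : ℕ) + 1)) v := by
    refine (linearIndependent_pow_apply (m := m + 1) (by rw [hf]; rfl) fun k hk h0 => hv ?_).comp
      Fin.succ (Fin.succ_injective _)
    rw [show m = m - k + k by omega, pow_add, Module.End.mul_apply, h0, map_zero]
  have hspan : Submodule.span K (Set.range fun k : Fin m => (f ^ ((k : ℕ) + 1)) v) ≤
      LinearMap.range f := by
    rw [Submodule.span_le]
    rintro _ ⟨k, rfl⟩
    exact ⟨(f ^ (k : ℕ)) v, by rw [← Module.End.mul_apply, ← pow_succ']⟩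
  have hrange : m ≤ finrank K (LinearMap.range f) := by
    simpa [finrank_span_eq_card hli] using Submodule.finrank_mono hspan
  have hker : 0 < finrank K (LinearMap.ker f) := by
    have hmem : (f ^ m) v ∈ LinearMap.ker f := by
      rw [LinearMap.mem_ker, ← Module.End.mul_apply, ← pow_succ', hf, LinearMap.zero_apply]
    exact Module.finrank_pos_iff_exists_ne_zero.2 ⟨⟨_, hmem⟩, (Submodule.mk_eq_zero _ _).not.2 hv⟩
  have := f.finrank_range_add_finrank_ker
  omega

end Nilpotent

open Finset in
theorem sum_range_le_of_le_sub {x b : ℕ → ℝ} (hx : ∀ k, 0 ≤ x k)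
    (h : ∀ k, x (k + 1) ≤ x k - b k) (n : ℕ) : ∑ k ∈ range n, b k ≤ x 0 := by
  have key : ∀ n, ∑ k ∈ range n, b k + x n ≤ x 0 := by
    intro n
    induction n with
    | zero => simp
    | succ n ih => rw [sum_range_succ]; linarith [h n]
  linarith [key n, hx n]

open Finset in
theorem pow_mul_le_sum_range_of_mul_sub_le {x b : ℕ → ℝ} {δ : ℝ} (hδ : 0 < δ) (hδ1 : δ ≤ 1)
    (hb : ∀ k, 0 ≤ b k) (h : ∀ k, δ * (x k - b k) ≤ x (k + 1)) {m : ℕ} (hm : x (m + 1) = 0) :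
    δ ^ m * x 0 ≤ ∑ k ∈ range (m + 1), b k := by
  have key : ∀ n, δ ^ n * x 0 ≤ ∑ k ∈ range n, b k + x n := by
    intro n
    induction n with
    | zero => simp
    | succ n ih =>
      have hsum : δ * ∑ k ∈ range n, b k ≤ ∑ k ∈ range n, b k :=
        mul_le_of_le_one_left (sum_nonneg fun k _ => hb k) hδ1
      rw [pow_succ', mul_assoc, sum_range_succ]
      nlinarith [mul_le_mul_of_nonneg_left ih hδ.le, h n, hb n]
  have hlast : x m ≤ b m := by
    have := h m
    rw [hm] at this
    nlinarith
  calc δ ^ m * x 0 ≤ ∑ k ∈ range m, b k + x m := key m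
    _ ≤ ∑ k ∈ range (m + 1), b k := by rw [sum_range_succ]; linarith

section InnerProductSpace

variable {𝕜 E : Type*} [RCLike 𝕜] [NormedAddCommGroup E] [InnerProductSpace 𝕜 E]

theorem Submodule.exists_norm_eq_one_eq_span_singleton {S : Submodule 𝕜 E}
    (hS : finrank 𝕜 S = 1) : ∃ u : E, ‖u‖ = 1 ∧ S = 𝕜 ∙ u := by
  obtain ⟨w, hwS, hw⟩ := Submodule.exists_mem_ne_zero_of_ne_bot fun h : S = ⊥ => by
    rw [h, finrank_bot] at hS
    exact zero_ne_one hS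
  refine ⟨(‖w‖ : 𝕜)⁻¹ • w, norm_smul_inv_norm hw,
    eq_span_singleton_of_mem_of_finrank_eq_one hS (S.smul_mem _ hwS) ?_⟩
  simp [hw]

namespace ContinuousLinearMap

theorem exists_norm_eq_one_orthogonal_range_eq_span_singleton [FiniteDimensional 𝕜 E]
    {N : E →L[𝕜] E} {m : ℕ} (hdim : finrank 𝕜 E = m + 1) (hN : N ^ (m + 1) = 0) (hN' : N ^ m ≠ 0) :
    ∃ u : E, ‖u‖ = 1 ∧ (LinearMap.range (N : E →ₗ[𝕜] E))ᗮ = 𝕜 ∙ u := by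
  have hrange : finrank 𝕜 (LinearMap.range (N : E →ₗ[𝕜] E)) = m :=
    Module.End.finrank_range_of_pow_eq_zero hdim
      (by rw [← toLinearMap_pow, hN, toLinearMap_zero])
      (by rwa [← toLinearMap_pow, Ne, ← toLinearMap_zero, coe_inj])
  refine Submodule.exists_norm_eq_one_eq_span_singleton ?_
  have := (LinearMap.range (N : E →ₗ[𝕜] E)).finrank_add_finrank_orthogonal
  omega

section Adjoint

variable [CompleteSpace E] {N : E →L[𝕜] E} {ε : ℝ}

theorem le_one_of_mul_norm_le_norm_apply (hN1 : ‖N‖ ≤ 1) (hN0 : N ≠ 0)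
    (hN : ∀ x ∈ (LinearMap.ker (N : E →ₗ[𝕜] E))ᗮ, ε * ‖x‖ ≤ ‖N x‖) : ε ≤ 1 := by
  have hker : LinearMap.ker (N : E →ₗ[𝕜] E) ≠ ⊤ := by
    rw [Ne, LinearMap.ker_eq_top]
    exact fun h => hN0 (coe_injective h)
  obtain ⟨x, hx, hx0⟩ := Submodule.exists_mem_ne_zero_of_ne_bot
    (mt Submodule.orthogonal_eq_bot_iff.1 hker)
  refine le_of_mul_le_mul_right ?_ (norm_pos_iff.2 hx0)
  calc ε * ‖x‖ ≤ ‖N x‖ := hN x hx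
    _ ≤ 1 * ‖x‖ := N.le_of_opNorm_le hN1 x

theorem mul_norm_le_norm_adjoint_apply_of_mem_range (hε : 0 ≤ ε)
    (hN : ∀ x ∈ (LinearMap.ker (N : E →ₗ[𝕜] E))ᗮ, ε * ‖x‖ ≤ ‖N x‖) {y : E}
    (hy : y ∈ LinearMap.range (N : E →ₗ[𝕜] E)) : ε * ‖y‖ ≤ ‖(N†) y‖ := by
  obtain ⟨w, rfl⟩ := hy
  set K := LinearMap.ker (N : E →ₗ[𝕜] E)
  have hw : N (Kᗮ.starProjection w) = N w := by
    conv_rhs => rw [← K.starProjection_add_starProjection_orthogonal w]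
    rw [map_add, show N (K.starProjection w) = 0 from K.starProjection_apply_mem w, zero_add]
  change ε * ‖N w‖ ≤ ‖(N†) (N w)‖
  rw [← hw]
  set x := Kᗮ.starProjection w
  have hsq : ‖N x‖ ^ 2 ≤ ‖(N†) (N x)‖ * ‖x‖ :=
    (N.apply_norm_sq_eq_inner_adjoint_left x).trans_le (re_inner_le_norm _ _)
  have hx := hN x (Kᗮ.starProjection_apply_mem w)
  rcases (norm_nonneg (N x)).eq_or_lt with h0 | hpos
  · rw [← h0, mul_zero]
    exact norm_nonneg _
  · refine le_of_mul_le_mul_right ?_ hpos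
    nlinarith [norm_nonneg ((N†) (N x))]

end Adjoint

section Observability

variable {A : E →L[𝕜] E} {L : Submodule 𝕜 E} [L.HasOrthogonalProjection]

theorem apply_starProjection_orthogonal (hAL : ∀ x ∈ L, A x = 0) (y : E) :
    A (Lᗮ.starProjection y) = A y := by
  conv_rhs => rw [← L.starProjection_add_starProjection_orthogonal y]
  rw [map_add, hAL _ (L.starProjection_apply_mem y), zero_add]

theorem norm_apply_sq_le_sub_norm_starProjection_sq (hA : ‖A‖ ≤ 1) (hAL : ∀ x ∈ L, A x = 0)
    (y : E) : ‖A y‖ ^ 2 ≤ ‖y‖ ^ 2 - ‖L.starProjection y‖ ^ 2 := by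
  rw [L.norm_sq_eq_add_norm_sq_starProjection y, add_sub_cancel_left,
    ← apply_starProjection_orthogonal hAL]
  gcongr
  simpa using A.le_of_opNorm_le hA (Lᗮ.starProjection y)

theorem sq_mul_sub_norm_starProjection_sq_le_norm_apply_sq {ε : ℝ} (hε : 0 ≤ ε)
    (hAL : ∀ x ∈ L, A x = 0) (hA : ∀ x ∈ Lᗮ, ε * ‖x‖ ≤ ‖A x‖) (y : E) :
    ε ^ 2 * (‖y‖ ^ 2 - ‖L.starProjection y‖ ^ 2) ≤ ‖A y‖ ^ 2 := by
  rw [L.norm_sq_eq_add_norm_sq_starProjection y, add_sub_cancel_left, ← mul_pow,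
    ← apply_starProjection_orthogonal hAL]
  gcongr
  exact hA _ (Lᗮ.starProjection_apply_mem y)

open Finset

theorem sum_norm_starProjection_pow_apply_sq_le (hA : ‖A‖ ≤ 1) (hAL : ∀ x ∈ L, A x = 0)
    (n : ℕ) (h : E) : ∑ k ∈ range n, ‖L.starProjection ((A ^ k) h)‖ ^ 2 ≤ ‖h‖ ^ 2 := by
  simpa only [pow_zero, one_apply_eq_self] using
    sum_range_le_of_le_sub (x := fun k => ‖(A ^ k) h‖ ^ 2)
      (b := fun k => ‖L.starProjection ((A ^ k) h)‖ ^ 2) (fun k => by positivity)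
      (fun k => by
        rw [pow_succ' A k, mul_apply_eq_comp]
        exact norm_apply_sq_le_sub_norm_starProjection_sq hA hAL _) n

theorem pow_mul_norm_sq_le_sum_norm_starProjection_pow_apply_sq {ε : ℝ} (hε : 0 < ε)
    (hε1 : ε ≤ 1) (hAL : ∀ x ∈ L, A x = 0) (hA : ∀ x ∈ Lᗮ, ε * ‖x‖ ≤ ‖A x‖) {m : ℕ}
    (hAm : A ^ (m + 1) = 0) (h : E) :
    ε ^ (2 * m) * ‖h‖ ^ 2 ≤ ∑ k ∈ range (m + 1), ‖L.starProjection ((A ^ k) h)‖ ^ 2 := by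
  rw [pow_mul]
  simpa only [pow_zero, one_apply_eq_self] using
    pow_mul_le_sum_range_of_mul_sub_le (x := fun k => ‖(A ^ k) h‖ ^ 2)
      (b := fun k => ‖L.starProjection ((A ^ k) h)‖ ^ 2) (pow_pos hε 2)
      (pow_le_one₀ hε.le hε1) (fun k => by positivity)
      (fun k => by
        rw [pow_succ' A k, mul_apply_eq_comp]
        exact sq_mul_sub_norm_starProjection_sq_le_norm_apply_sq hε.le hAL hA _)
      (by rw [hAm, zero_apply, norm_zero, sq, zero_mul])

end Observability

end ContinuousLinearMap

end InnerProductSpace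

section Synthesis

variable {𝕜 E ι : Type*} [RCLike 𝕜] [NormedAddCommGroup E] [InnerProductSpace 𝕜 E]
  [Fintype ι] [DecidableEq ι]

variable (𝕜) in
/-- The synthesis operator `a ↦ ∑ i, a i • v i` of a finite family of vectors. -/
noncomputable def synthesisOp (v : ι → E) : EuclideanSpace 𝕜 ι →L[𝕜] E :=
  LinearMap.toContinuousLinearMap ((EuclideanSpace.basisFun ι 𝕜).toBasis.constr 𝕜 v)

theorem synthesisOp_single (v : ι → E) (i : ι) :
    synthesisOp 𝕜 v (EuclideanSpace.single i 1) = v i := by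
  rw [synthesisOp, LinearMap.coe_toContinuousLinearMap', ← EuclideanSpace.basisFun_apply ι 𝕜,
    ← OrthonormalBasis.coe_toBasis, Module.Basis.constr_basis]

theorem norm_adjoint_synthesisOp_apply_sq [CompleteSpace E] (v : ι → E) (h : E) :
    ‖((synthesisOp 𝕜 v)†) h‖ ^ 2 = ∑ i, ‖⟪v i, h⟫_𝕜‖ ^ 2 := by
  rw [EuclideanSpace.norm_sq_eq]
  congr! with i
  rw [← synthesisOp_single (𝕜 := 𝕜) v i, ← ContinuousLinearMap.adjoint_inner_right,
    EuclideanSpace.inner_single_left, map_one, one_mul]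

end Synthesis

section FiniteDimensional

variable {𝕜 E F : Type*} [RCLike 𝕜] [NormedAddCommGroup E] [InnerProductSpace 𝕜 E]
  [NormedAddCommGroup F] [InnerProductSpace 𝕜 F] [FiniteDimensional 𝕜 E] [FiniteDimensional 𝕜 F]

theorem ContinuousLinearMap.mul_norm_le_norm_adjoint_apply [CompleteSpace E] [CompleteSpace F]
    {S : E →L[𝕜] F} (hdim : finrank 𝕜 E = finrank 𝕜 F) {c : ℝ} (hc : 0 < c)
    (hS : ∀ x, c * ‖x‖ ≤ ‖S x‖) (y : F) : c * ‖y‖ ≤ ‖(S†) y‖ := by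
  have hinj : Function.Injective S := by
    refine (injective_iff_map_eq_zero S).2 fun x hx => norm_eq_zero.1 ?_
    have := hS x
    rw [hx, norm_zero] at this
    nlinarith [norm_nonneg x]
  obtain ⟨x, rfl⟩ : ∃ x, S x = y := (LinearMap.injective_iff_surjective_of_finrank_eq_finrank
    hdim (f := (S : E →ₗ[𝕜] F))).1 hinj y
  have hsq : ‖S x‖ ^ 2 ≤ ‖x‖ * ‖(S†) (S x)‖ :=
    (S.apply_norm_sq_eq_inner_adjoint_right x).trans_le (re_inner_le_norm _ _)
  rcases (norm_nonneg (S x)).eq_or_lt with h0 | hpos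
  · rw [← h0, mul_zero]
    exact norm_nonneg _
  · refine le_of_mul_le_mul_right ?_ hpos
    nlinarith [hS x, norm_nonneg ((S†) (S x))]

theorem exists_continuousLinearEquiv_symm_eq_smul {T : F →L[𝕜] E}
    (hdim : finrank 𝕜 F = finrank 𝕜 E) {c : ℝ} (hc : 0 < c) (hT : ∀ a, c * ‖a‖ ≤ ‖T a‖)
    (hT1 : ‖T‖ ≤ 1) :
    ∃ X : E ≃L[𝕜] F, (∀ a, X.symm a = (c : 𝕜)⁻¹ • T a) ∧ ‖(X : E →L[𝕜] F)‖ ≤ 1 ∧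
      ‖(X.symm : F →L[𝕜] E)‖ ≤ c⁻¹ := by
  let T' : F →ₗ[𝕜] E := (c : 𝕜)⁻¹ • (T : F →ₗ[𝕜] E)
  have hnorm : ∀ a, ‖T' a‖ = c⁻¹ * ‖T a‖ := fun a => by
    simp [T', norm_smul, abs_of_pos hc]
  have hT' : ∀ a, ‖a‖ ≤ ‖T' a‖ := fun a => by
    rw [hnorm, le_inv_mul_iff₀ hc]
    exact hT a
  have hinj : Function.Injective T' := (injective_iff_map_eq_zero T').2 fun a ha =>
    norm_le_zero_iff.1 ((hT' a).trans_eq (by rw [ha, norm_zero]))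
  let Y : F ≃L[𝕜] E := LinearEquiv.toContinuousLinearEquiv <| LinearEquiv.ofBijective T'
    ⟨hinj, (LinearMap.injective_iff_surjective_of_finrank_eq_finrank hdim).1 hinj⟩
  refine ⟨Y.symm, fun a => rfl, ?_, ?_⟩
  · refine ContinuousLinearMap.opNorm_le_bound _ zero_le_one fun h => ?_
    calc ‖Y.symm h‖ ≤ ‖T' (Y.symm h)‖ := hT' _
      _ = 1 * ‖h‖ := by rw [one_mul]; exact congrArg norm (Y.apply_symm_apply h)
  · refine ContinuousLinearMap.opNorm_le_bound _ (inv_nonneg.2 hc.le) fun a => ?_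
    rw [Y.symm_symm]
    change ‖T' a‖ ≤ _
    rw [hnorm]
    gcongr
    exact T.le_of_opNorm_le hT1 a |>.trans_eq (one_mul _)

end FiniteDimensional

theorem ContinuousLinearEquiv.apply_map_symm_single_eq_shift {𝕜 E : Type*} [RCLike 𝕜]
    [NormedAddCommGroup E] [NormedSpace 𝕜 E] {n : ℕ} {N : E →L[𝕜] E} {u : E}
    (hu : (N ^ n) u = 0) (X : E ≃L[𝕜] EuclideanSpace 𝕜 (Fin n)) {a : 𝕜}
    (hX : ∀ k : Fin n, X.symm (EuclideanSpace.single k 1) = a • (N ^ (k : ℕ)) u) (k : Fin n) :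
    X (N (X.symm (EuclideanSpace.single k 1))) =
      if h : (k : ℕ) + 1 < n then EuclideanSpace.single ⟨(k : ℕ) + 1, h⟩ 1 else 0 := by
  rw [hX, N.map_smul, ← mul_apply_eq_comp, ← pow_succ']
  split_ifs with h
  · rw [← hX ⟨(k : ℕ) + 1, h⟩, X.apply_symm_apply]
  · rw [show (k : ℕ) + 1 = n by omega, hu, smul_zero, map_zero]

section ShiftModel

variable {𝕜 E : Type*} [RCLike 𝕜] [NormedAddCommGroup E] [InnerProductSpace 𝕜 E]
  [CompleteSpace E] {N : E →L[𝕜] E} {u : E}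

open ContinuousLinearMap

theorem norm_adjoint_synthesisOp_pow_apply_sq (hu : ‖u‖ = 1) (n : ℕ) (h : E) :
    ‖((synthesisOp 𝕜 fun k : Fin n => (N ^ (k : ℕ)) u)†) h‖ ^ 2 =
      ∑ k ∈ Finset.range n, ‖(𝕜 ∙ u).starProjection (((N†) ^ k) h)‖ ^ 2 := by
  rw [norm_adjoint_synthesisOp_apply_sq,
    Fin.sum_univ_eq_sum_range (fun k => ‖⟪(N ^ k) u, h⟫_𝕜‖ ^ 2)]
  congr! with k
  rw [Submodule.starProjection_unit_singleton 𝕜 hu, norm_smul, hu, mul_one, ← star_eq_adjoint,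
    ← star_pow, star_eq_adjoint, adjoint_inner_right]

theorem norm_synthesisOp_pow_le_one (hu : ‖u‖ = 1)
    (hspan : (LinearMap.range (N : E →ₗ[𝕜] E))ᗮ = 𝕜 ∙ u) (hN : ‖N‖ ≤ 1) (n : ℕ) :
    ‖synthesisOp 𝕜 fun k : Fin n => (N ^ (k : ℕ)) u‖ ≤ 1 := by
  rw [← adjoint.norm_map]
  refine opNorm_le_bound _ zero_le_one fun h => ?_
  rw [one_mul, ← sq_le_sq₀ (norm_nonneg _) (norm_nonneg _),
    norm_adjoint_synthesisOp_pow_apply_sq hu]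
  refine sum_norm_starProjection_pow_apply_sq_le (by rwa [adjoint.norm_map]) (fun x hx => ?_) n h
  rwa [← hspan, N.orthogonal_range] at hx

theorem pow_mul_norm_le_norm_synthesisOp_pow_apply [FiniteDimensional 𝕜 E] (hu : ‖u‖ = 1)
    (hspan : (LinearMap.range (N : E →ₗ[𝕜] E))ᗮ = 𝕜 ∙ u) {ε : ℝ} (hε : 0 < ε) (hε1 : ε ≤ 1)
    (hN : ∀ x ∈ (LinearMap.ker (N : E →ₗ[𝕜] E))ᗮ, ε * ‖x‖ ≤ ‖N x‖) {m : ℕ}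
    (hdim : finrank 𝕜 E = m + 1) (hNm : N ^ (m + 1) = 0) (a : EuclideanSpace 𝕜 (Fin (m + 1))) :
    ε ^ m * ‖a‖ ≤ ‖synthesisOp 𝕜 (fun k : Fin (m + 1) => (N ^ (k : ℕ)) u) a‖ := by
  set T := synthesisOp 𝕜 fun k : Fin (m + 1) => (N ^ (k : ℕ)) u
  rw [← T.adjoint_adjoint]
  refine (T†).mul_norm_le_norm_adjoint_apply (by rw [hdim, finrank_euclideanSpace_fin])
    (pow_pos hε m) (fun h => ?_) a
  rw [← sq_le_sq₀ (by positivity) (norm_nonneg _), mul_pow, ← pow_mul, mul_comm m 2,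
    norm_adjoint_synthesisOp_pow_apply_sq hu]
  refine pow_mul_norm_sq_le_sum_norm_starProjection_pow_apply_sq hε hε1 (fun x hx => ?_) ?_
    (by rw [← star_eq_adjoint, ← star_pow, hNm, star_zero]) h
  · rwa [← hspan, N.orthogonal_range] at hx
  · rw [← hspan, Submodule.orthogonal_orthogonal]
    exact fun x hx => N.mul_norm_le_norm_adjoint_apply_of_mem_range hε.le hN hx

end ShiftModel

theorem stmt_0_general {H : Type*} [NormedAddCommGroup H] [InnerProductSpace ℂ H]
    [FiniteDimensional ℂ H] (n : ℕ) (hn : Module.finrank ℂ H = n)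
    (N : H →L[ℂ] H) (hcontr : ‖N‖ ≤ 1)
    (hnilp : N ^ n = 0) (hnilp' : N ^ (n - 1) ≠ 0)
    (ε : ℝ) (hε : 0 < ε)
    (hbound : ∀ x ∈ (LinearMap.ker (N : H →ₗ[ℂ] H))ᗮ, ε * ‖x‖ ≤ ‖N x‖) :
    ∃ X : H ≃L[ℂ] EuclideanSpace ℂ (Fin n),
      (∀ k : Fin n,
        X (N (X.symm (EuclideanSpace.single k 1))) =
          if h : (k : ℕ) + 1 < n then EuclideanSpace.single ⟨(k : ℕ) + 1, h⟩ 1 else 0) ∧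
      ‖(X : H →L[ℂ] EuclideanSpace ℂ (Fin n))‖ ≤ 1 ∧
      ‖(X.symm : EuclideanSpace ℂ (Fin n) →L[ℂ] H)‖ ≤ (ε ^ (2 * (n - 1)))⁻¹ := by
  obtain ⟨m, rfl⟩ : ∃ m, n = m + 1 :=
    Nat.exists_eq_add_one.2 (Nat.pos_of_ne_zero fun h => hnilp' (by simpa [h] using hnilp))
  rw [Nat.add_sub_cancel] at hnilp' ⊢
  obtain ⟨u, hu, hspan⟩ := N.exists_norm_eq_one_orthogonal_range_eq_span_singleton hn hnilp hnilp'
  have hδ : ∀ x ∈ (LinearMap.ker (N : H →ₗ[ℂ] H))ᗮ, min ε 1 * ‖x‖ ≤ ‖N x‖ := fun x hx =>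
    (mul_le_mul_of_nonneg_right (min_le_left _ _) (norm_nonneg x)).trans (hbound x hx)
  -- The telescoping bound needs a constant `≤ 1`; `ε` is one unless `n = 1`.
  have hc : ε ^ (2 * m) ≤ min ε 1 ^ m := by
    rcases m.eq_zero_or_pos with rfl | hm
    · simp
    have hε1 := N.le_one_of_mul_norm_le_norm_apply hcontr
      (fun h => hnilp' (by rw [h, zero_pow hm.ne'])) hbound
    rw [min_eq_left hε1, pow_mul]
    exact pow_le_pow_left₀ (by positivity) (by nlinarith) m
  obtain ⟨X, hX, hX1, hX2⟩ := exists_continuousLinearEquiv_symm_eq_smul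
    (T := synthesisOp ℂ fun k : Fin (m + 1) => (N ^ (k : ℕ)) u) (by simp [hn]) (pow_pos hε _)
    (fun a => (mul_le_mul_of_nonneg_right hc (norm_nonneg a)).trans
      (pow_mul_norm_le_norm_synthesisOp_pow_apply hu hspan (lt_min hε one_pos) (min_le_right _ _)
        hδ hn hnilp a))
    (norm_synthesisOp_pow_le_one hu hspan hcontr _)
  exact ⟨X, X.apply_map_symm_single_eq_shift (by rw [hnilp]; rfl)
    (fun k => by rw [hX, synthesisOp_single]), hX1, hX2⟩

/-- a multiplicity-free nilpotent contraction of order `n` on an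
`n`-dimensional Hilbert space, bounded below by `ε` on `(ker N)ᗮ`, is similar to the
Jordan nilpotent cell of size `n` via an invertible `X` with `‖X‖ ≤ 1` and
`‖X⁻¹‖ ≤ ε ^ (-2(n-1))`. -/
theorem stmt_0 {H : Type*} [NormedAddCommGroup H] [InnerProductSpace ℂ H]
    [FiniteDimensional ℂ H] (n : ℕ) (hn : Module.finrank ℂ H = n)
    (N : H →L[ℂ] H) (hcontr : ‖N‖ ≤ 1)
    (hnilp : N ^ n = 0) (hnilp' : N ^ (n - 1) ≠ 0)
    (ξ : H) (hcyc : Submodule.span ℂ (Set.range fun k : ℕ => (N ^ k) ξ) = ⊤)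
    (ε : ℝ) (hε : 0 < ε)
    (hbound : ∀ x ∈ (LinearMap.ker (N : H →ₗ[ℂ] H))ᗮ, ε * ‖x‖ ≤ ‖N x‖) :
    ∃ X : H ≃L[ℂ] EuclideanSpace ℂ (Fin n),
      (∀ k : Fin n,
        X (N (X.symm (EuclideanSpace.single k 1))) =
          if h : (k : ℕ) + 1 < n then EuclideanSpace.single ⟨(k : ℕ) + 1, h⟩ 1 else 0) ∧
      ‖(X : H →L[ℂ] EuclideanSpace ℂ (Fin n))‖ ≤ 1 ∧
      ‖(X.symm : EuclideanSpace ℂ (Fin n) →L[ℂ] H)‖ ≤ (ε ^ (2 * (n - 1)))⁻¹ :=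
  stmt_0_general n hn N hcontr hnilp hnilp' ε hε hbound
end

section
/- Let N be a contraction on an n-dimensional Hilbert space, nilpotent of order n, with cyclic vector ξ satisfying ‖N^{n-1}ξ‖ = 1 and N^{n-1}ξ orthogonal to N^k ξ for 0 ≤ k ≤ n−2. Then for all complex numbers c_0,…,c_{n-1}, one has ‖Σ_{j=0}^{n-1} c_j N^j ξ‖² ≥ Σ_{j=0}^{n-1} |c_j|². -/
/-!
Put `e = N^{n-1} ξ`, a unit vector with `N e = 0`. Splitting `y` along `e` gives
`‖y‖² = |⟪e, y⟫|² + ‖y - ⟪e, y⟫ e‖²`, and `N` kills the `e`-component, so the contraction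
property yields `|⟪e, y⟫|² + ‖N y‖² ≤ ‖y‖²`. Iterating this along `y, N y, N² y, …` gives
`∑_{k<n} |⟪e, N^k y⟫|² ≤ ‖y‖²`, and for `y = ∑ c_j N^j ξ` the orthogonality hypotheses say
exactly that `⟪e, N^k y⟫ = c_{n-1-k}`.
-/

open scoped InnerProductSpace

namespace ContinuousLinearMap

variable {𝕜 H : Type*} [RCLike 𝕜] [NormedAddCommGroup H] [InnerProductSpace 𝕜 H]

section Contraction

variable {N : H →L[𝕜] H} (hN : ‖N‖ ≤ 1) {e : H} (he : ‖e‖ = 1) (hNe : N e = 0)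
include hN he hNe

theorem norm_inner_sq_add_norm_apply_sq_le (y : H) :
    ‖⟪e, y⟫_𝕜‖ ^ 2 + ‖N y‖ ^ 2 ≤ ‖y‖ ^ 2 := by
  set z := y - ⟪e, y⟫_𝕜 • e
  have hez : ⟪⟪e, y⟫_𝕜 • e, z⟫_𝕜 = 0 := by
    rw [inner_smul_left, inner_sub_right, inner_smul_right, inner_self_eq_norm_sq_to_K, he]
    simp
  have hy : ‖y‖ ^ 2 = ‖⟪e, y⟫_𝕜‖ ^ 2 + ‖z‖ ^ 2 := by
    have := norm_add_sq_eq_norm_sq_add_norm_sq_of_inner_eq_zero _ _ hez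
    rwa [add_sub_cancel, norm_smul, he, mul_one, ← sq, ← sq, ← sq] at this
  have hNz : N z = N y := by simp [z, hNe]
  have hNz_le : ‖N z‖ ≤ ‖z‖ := by
    simpa using N.le_opNorm z |>.trans (mul_le_of_le_one_left (norm_nonneg z) hN)
  rw [hy, ← hNz]
  gcongr

theorem sum_norm_inner_pow_sq_add_norm_pow_sq_le (y : H) (m : ℕ) :
    ∑ k ∈ Finset.range m, ‖⟪e, (N ^ k) y⟫_𝕜‖ ^ 2 + ‖(N ^ m) y‖ ^ 2 ≤ ‖y‖ ^ 2 := by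
  induction m with
  | zero => simp
  | succ m ih =>
    have step := norm_inner_sq_add_norm_apply_sq_le hN he hNe ((N ^ m) y)
    rw [← mul_apply_eq_comp, ← pow_succ'] at step
    rw [Finset.sum_range_succ]
    linarith

theorem sum_norm_inner_pow_sq_le (y : H) (m : ℕ) :
    ∑ k ∈ Finset.range m, ‖⟪e, (N ^ k) y⟫_𝕜‖ ^ 2 ≤ ‖y‖ ^ 2 :=
  le_of_add_le_of_nonneg_left (sum_norm_inner_pow_sq_add_norm_pow_sq_le hN he hNe y m)
    (sq_nonneg _)

end Contraction

section Nilpotent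

variable {N : H →L[𝕜] H} {n : ℕ} (hnilp : N ^ n = 0) {ξ : H}
  (hnorm : ‖(N ^ (n - 1)) ξ‖ = 1)
  (horth : ∀ k, k < n - 1 → ⟪(N ^ (n - 1)) ξ, (N ^ k) ξ⟫_𝕜 = 0)
include hnilp hnorm horth

theorem inner_pow_apply_eq_ite (m : ℕ) :
    ⟪(N ^ (n - 1)) ξ, (N ^ m) ξ⟫_𝕜 = if m = n - 1 then 1 else 0 := by
  rcases lt_trichotomy m (n - 1) with h | rfl | h
  · rw [horth m h, if_neg h.ne]
  · rw [if_pos rfl, inner_self_eq_norm_sq_to_K, hnorm]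
    norm_num
  · rw [pow_eq_zero_of_le (show n ≤ m by omega) hnilp, if_neg h.ne']
    simp

theorem inner_pow_apply_sum_eq (c : Fin n → 𝕜) (k : Fin n) :
    ⟪(N ^ (n - 1)) ξ, (N ^ (k : ℕ)) (∑ j : Fin n, c j • (N ^ (j : ℕ)) ξ)⟫_𝕜 = c k.rev := by
  have hrev : ∀ j : Fin n, (k : ℕ) + j = n - 1 ↔ j = k.rev := by
    intro j
    rw [Fin.ext_iff, Fin.val_rev]
    omega
  simp only [map_sum, map_smul, ← mul_apply_eq_comp, ← pow_add, inner_sum, inner_smul_right,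
    inner_pow_apply_eq_ite hnilp hnorm horth, hrev, mul_ite, mul_one, mul_zero,
    Finset.sum_ite_eq', Finset.mem_univ, if_true]

end Nilpotent

end ContinuousLinearMap

theorem stmt_1_general {H : Type*} [NormedAddCommGroup H] [InnerProductSpace ℂ H] (n : ℕ)
    (N : H →L[ℂ] H) (hcontr : ‖N‖ ≤ 1) (hnilp : N ^ n = 0) (ξ : H)
    (hnorm : ‖(N ^ (n - 1)) ξ‖ = 1)
    (horth : ∀ k, k < n - 1 → ⟪(N ^ (n - 1)) ξ, (N ^ k) ξ⟫_ℂ = 0) :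
    ∀ c : Fin n → ℂ,
      ∑ j : Fin n, ‖c j‖ ^ 2 ≤ ‖∑ j : Fin n, c j • (N ^ (j : ℕ)) ξ‖ ^ 2 := by
  intro c
  rcases Nat.eq_zero_or_pos n with rfl | hn0
  · simp
  have hNe : N ((N ^ (n - 1)) ξ) = 0 := by
    rw [← mul_apply_eq_comp, ← pow_succ', Nat.sub_add_cancel hn0, hnilp, zero_apply]
  calc ∑ j : Fin n, ‖c j‖ ^ 2 = ∑ k : Fin n, ‖c k.rev‖ ^ 2 := (Equiv.sum_comp Fin.revPerm _).symm
    _ = ∑ k ∈ Finset.range n,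
          ‖⟪(N ^ (n - 1)) ξ, (N ^ k) (∑ j : Fin n, c j • (N ^ (j : ℕ)) ξ)⟫_ℂ‖ ^ 2 := by
      rw [← Fin.sum_univ_eq_sum_range]
      simp only [ContinuousLinearMap.inner_pow_apply_sum_eq hnilp hnorm horth]
    _ ≤ _ := ContinuousLinearMap.sum_norm_inner_pow_sq_le hcontr hnorm hNe _ n

/-- lower estimate `‖Σ c_j N^j ξ‖² ≥ Σ |c_j|²` for a nilpotent
contraction of order `n` with cyclic vector `ξ` such that `‖N^{n-1}ξ‖ = 1` and
`N^{n-1}ξ ⟂ N^k ξ` for `k ≤ n-2`. -/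
theorem stmt_1 {H : Type*} [NormedAddCommGroup H] [InnerProductSpace ℂ H]
    [FiniteDimensional ℂ H] (n : ℕ) (hn : Module.finrank ℂ H = n)
    (N : H →L[ℂ] H) (hcontr : ‖N‖ ≤ 1) (hnilp : N ^ n = 0)
    (ξ : H) (hcyc : Submodule.span ℂ (Set.range fun k : Fin n => (N ^ (k : ℕ)) ξ) = ⊤)
    (hnorm : ‖(N ^ (n - 1)) ξ‖ = 1)
    (horth : ∀ k, k < n - 1 → ⟪(N ^ (n - 1)) ξ, (N ^ k) ξ⟫_ℂ = 0) :
    ∀ c : Fin n → ℂ,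
      ∑ j : Fin n, ‖c j‖ ^ 2 ≤ ‖∑ j : Fin n, c j • (N ^ (j : ℕ)) ξ‖ ^ 2 :=
  stmt_1_general n N hcontr hnilp ξ hnorm horth
end

section
/- Let N be a nilpotent operator of order n on an n-dimensional Hilbert space with cyclic vector ξ, and suppose ε > 0 satisfies ‖Nx‖ ≥ ε‖x‖ for every x in the orthogonal complement of ker N. Assume ‖N^{n-1}ξ‖ = 1 and N^{n-1}ξ ⟂ N^k ξ for 0 ≤ k ≤ n−2. Then for all complex numbers c_0,…,c_{n-1}: ‖Σ_{j=0}^{n-1} c_j N^j ξ‖² ≤ Σ_{j=0}^{n-1} |c_j|² / ε^{2(n-1-j)}. -/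
/-!
Index the vectors from the top, `w i = N^{n-1-i} ξ`, so that `N w_{i+1} = w_i`. In
`∑ aᵢ wᵢ = a₀ w₀ + y` the tail `y` is orthogonal to `w₀`, hence to `ker N`; so
`ε ‖y‖ ≤ ‖N y‖`, and `N y = ∑ a_{i+1} wᵢ` is a combination of one fewer vectors.
Pythagoras and induction on the number of vectors then give the bound, each application of `N`
costing a factor `ε⁻²`.
-/

open scoped InnerProductSpace

open Finset

section OrthogonalChain

variable {𝕜 E : Type*} [RCLike 𝕜] [NormedAddCommGroup E] [InnerProductSpace 𝕜 E]

theorem norm_sq_sum_smul_chain_le (N : E →ₗ[𝕜] E) (w : ℕ → E) (hw0 : ‖w 0‖ ≤ 1)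
    {ε : ℝ} (hε : 0 < ε)
    (hbound : ∀ x, ⟪w 0, x⟫_𝕜 = 0 → ε * ‖x‖ ≤ ‖N x‖) :
    ∀ (k : ℕ), (∀ i, i + 1 < k → N (w (i + 1)) = w i) →
      (∀ i, i + 1 < k → ⟪w 0, w (i + 1)⟫_𝕜 = 0) → ∀ a : Fin k → 𝕜,
      ‖∑ i, a i • w i‖ ^ 2 ≤ ∑ i, ‖a i‖ ^ 2 / ε ^ (2 * (i : ℕ))
  | 0, _, _, _ => by simp
  | k + 1, hw, horth, a => by
    set y := ∑ i : Fin k, a i.succ • w (i + 1)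
    have hy : ⟪w 0, y⟫_𝕜 = 0 := by
      simp only [y, inner_sum]
      exact sum_eq_zero fun i _ => by rw [inner_smul_right, horth i (by omega), mul_zero]
    have hNy : N y = ∑ i : Fin k, a i.succ • w i := by
      simp only [y, map_sum, map_smul]
      exact sum_congr rfl fun i _ => by rw [hw i (by omega)]
    have ih := norm_sq_sum_smul_chain_le N w hw0 hε hbound k
      (fun i hi => hw i (by omega)) (fun i hi => horth i (by omega)) (a ∘ Fin.succ)
    have hy_le : ‖y‖ ^ 2 ≤ ∑ i : Fin k, ‖a i.succ‖ ^ 2 / ε ^ (2 * (i + 1 : ℕ)) :=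
      calc ‖y‖ ^ 2 = (ε * ‖y‖) ^ 2 / ε ^ 2 := by field_simp
        _ ≤ ‖N y‖ ^ 2 / ε ^ 2 := by gcongr; exact hbound y hy
        _ ≤ (∑ i : Fin k, ‖a i.succ‖ ^ 2 / ε ^ (2 * (i : ℕ))) / ε ^ 2 := by
          gcongr; exact hNy ▸ ih
        _ = ∑ i : Fin k, ‖a i.succ‖ ^ 2 / ε ^ (2 * (i + 1 : ℕ)) := by
          simp only [sum_div, div_div, ← pow_add, mul_add, mul_one]
    have hpyth : ‖a 0 • w 0 + y‖ ^ 2 = ‖a 0 • w 0‖ ^ 2 + ‖y‖ ^ 2 := by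
      rw [sq, sq, sq, norm_add_sq_eq_norm_sq_add_norm_sq_of_inner_eq_zero (𝕜 := 𝕜)]
      rw [inner_smul_left, hy, mul_zero]
    have h0 : ‖a 0 • w 0‖ ^ 2 ≤ ‖a 0‖ ^ 2 := by
      rw [norm_smul, mul_pow]
      exact mul_le_of_le_one_right (by positivity) (pow_le_one₀ (norm_nonneg _) hw0)
    have hsplit : ∑ i, a i • w i = a 0 • w 0 + y := Fin.sum_univ_succ _
    rw [hsplit, hpyth, Fin.sum_univ_succ]
    simpa using add_le_add h0 hy_le

end OrthogonalChain

theorem stmt_2_general {H : Type*} [NormedAddCommGroup H] [InnerProductSpace ℂ H]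
    (n : ℕ)
    (N : H →L[ℂ] H)
    (ξ : H)
    (hker : LinearMap.ker (N : H →ₗ[ℂ] H) = Submodule.span ℂ {(N ^ (n - 1)) ξ})
    (hnorm : ‖(N ^ (n - 1)) ξ‖ = 1)
    (horth : ∀ k, k < n - 1 → ⟪(N ^ (n - 1)) ξ, (N ^ k) ξ⟫_ℂ = 0)
    (ε : ℝ) (hε : 0 < ε)
    (hbound : ∀ x ∈ (LinearMap.ker (N : H →ₗ[ℂ] H))ᗮ, ε * ‖x‖ ≤ ‖N x‖) :
    ∀ c : Fin n → ℂ,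
      ‖∑ j : Fin n, c j • (N ^ (j : ℕ)) ξ‖ ^ 2 ≤
        ∑ j : Fin n, ‖c j‖ ^ 2 / ε ^ (2 * (n - 1 - (j : ℕ))) := by
  intro c
  set w : ℕ → H := fun i => (N ^ (n - 1 - i)) ξ
  have hw : ∀ i, i + 1 < n → (N : H →ₗ[ℂ] H) (w (i + 1)) = w i := fun i hi => by
    simp only [w]
    rw [show n - 1 - i = n - 1 - (i + 1) + 1 by omega, pow_succ']
    rfl
  have hbound' : ∀ x, ⟪w 0, x⟫_ℂ = 0 → ε * ‖x‖ ≤ ‖N x‖ := fun x hx =>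
    hbound x (hker ▸ Submodule.mem_orthogonal_singleton_iff_inner_right.mpr hx)
  have key := norm_sq_sum_smul_chain_le (N : H →ₗ[ℂ] H) w hnorm.le hε hbound' n hw
    (fun i hi => horth _ (by omega)) (c ∘ Fin.rev)
  rw [← Equiv.sum_comp Fin.revPerm, ← Equiv.sum_comp Fin.revPerm (fun j => ‖c j‖ ^ 2 / _)]
  convert key using 4 with i _ i _
  · simp only [w, Function.comp_apply, Fin.revPerm_apply, Fin.val_rev, Nat.sub_sub, add_comm]
  · rfl
  · simp only [Fin.revPerm_apply, Fin.val_rev]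
    omega

/-- upper estimate `‖Σ c_j N^j ξ‖² ≤ Σ |c_j|² / ε^{2(n-1-j)}` for a
nilpotent operator of order `n` with cyclic vector `ξ`, bounded below by `ε` on
`(ker N)ᗮ`, with `ker N` spanned by `N^{n-1}ξ`, `‖N^{n-1}ξ‖ = 1` and
`N^{n-1}ξ ⟂ N^k ξ` for `k ≤ n-2`. -/
theorem stmt_2 {H : Type*} [NormedAddCommGroup H] [InnerProductSpace ℂ H]
    [FiniteDimensional ℂ H] (n : ℕ) (hn : Module.finrank ℂ H = n)
    (N : H →L[ℂ] H) (hnilp : N ^ n = 0) (hnilp' : N ^ (n - 1) ≠ 0)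
    (ξ : H) (hcyc : Submodule.span ℂ (Set.range fun k : Fin n => (N ^ (k : ℕ)) ξ) = ⊤)
    (hker : LinearMap.ker (N : H →ₗ[ℂ] H) = Submodule.span ℂ {(N ^ (n - 1)) ξ})
    (hnorm : ‖(N ^ (n - 1)) ξ‖ = 1)
    (horth : ∀ k, k < n - 1 → ⟪(N ^ (n - 1)) ξ, (N ^ k) ξ⟫_ℂ = 0)
    (ε : ℝ) (hε : 0 < ε)
    (hbound : ∀ x ∈ (LinearMap.ker (N : H →ₗ[ℂ] H))ᗮ, ε * ‖x‖ ≤ ‖N x‖) :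
    ∀ c : Fin n → ℂ,
      ‖∑ j : Fin n, c j • (N ^ (j : ℕ)) ξ‖ ^ 2 ≤
        ∑ j : Fin n, ‖c j‖ ^ 2 / ε ^ (2 * (n - 1 - (j : ℕ))) :=
  stmt_2_general n N ξ hker hnorm horth ε hε hbound
end

section
/- If N is nilpotent of order n on an n-dimensional space and ξ is a cyclic vector for N, then there exist scalars a_0,…,a_{n-2} ∈ ℂ such that the vector ζ₀ = ξ − a_{n-2} Nξ − a_{n-3} N²ξ − … − a_0 N^{n-1}ξ is cyclic for N and N^{n-1}ζ₀ is orthogonal to N^k ζ₀ for every 0 ≤ k ≤ n−2. -/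
/-!
Write `ζ = U ξ` with `U = 1 - ∑ a_j N^(j+1)`. Since `N` is nilpotent, `U` is a unit commuting
with `N`, so it maps the cyclic basis `N^k ξ` onto `N^k ζ` and `ζ` is cyclic for every choice
of `a`. Moreover `N^(n-1) ζ = N^(n-1) ξ =: η`, and the conditions `⟪η, N^k ζ⟫ = 0` form a
triangular Hankel system in `a` whose diagonal entries are all `‖η‖² ≠ 0`; it is solved by
inverting a power series.
-/

open scoped InnerProductSpace
open Finset PowerSeries

theorem exists_sum_range_mul_sub_eq {K : Type*} [Field K] (v g : ℕ → K) (hv : v 0 ≠ 0) :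
    ∃ a : ℕ → K, ∀ m, ∑ j ∈ range (m + 1), a j * v (m - j) = g m := by
  refine ⟨fun j => coeff j (mk g * (mk v)⁻¹), fun m => ?_⟩
  have hdiv : mk g * (mk v)⁻¹ * mk v = mk g := by
    rw [mul_assoc, PowerSeries.inv_mul_cancel _ (by simpa using hv), mul_one]
  simpa [coeff_mul, Nat.sum_antidiagonal_eq_sum_range_succ_mk] using congr(coeff m $hdiv)

theorem exists_sum_range_mul_shift_eq {K : Type*} [Field K] {n : ℕ} {u : ℕ → K}
    (hu : u (n - 1) ≠ 0) (hu_zero : ∀ d, n ≤ d → u d = 0) :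
    ∃ a : ℕ → K, ∀ k < n - 1, ∑ j ∈ range (n - 1), a j * u (j + 1 + k) = u k := by
  -- reversing the indices, `i ↦ u (n - 1 - i)`, turns the system into a convolution
  obtain ⟨a, ha⟩ := exists_sum_range_mul_sub_eq (fun i => u (n - 1 - i)) (fun m => u (n - 2 - m))
    (by simpa using hu)
  refine ⟨a, fun k hk => ?_⟩
  have hsplit := ha (n - 2 - k)
  rw [show n - 2 - (n - 2 - k) = k by omega, show n - 2 - k + 1 = n - 1 - k by omega] at hsplit
  rw [← hsplit, ← sum_range_add_sum_Ico _ (show n - 1 - k ≤ n - 1 by omega),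
    sum_eq_zero (s := Ico _ _) fun j hj => by rw [hu_zero _ (by simp at hj; omega), mul_zero],
    add_zero]
  refine sum_congr rfl fun j hj => ?_
  rw [show n - 1 - (n - 2 - k - j) = j + 1 + k by simp at hj; omega]

section Correction

variable {𝕜 E : Type*} [NormedField 𝕜] [NormedAddCommGroup E] [NormedSpace 𝕜 E]

theorem span_range_pow_apply_eq_top_of_isUnit {n : ℕ} {N U : E →L[𝕜] E} (hU : IsUnit U)
    (hUN : Commute U N) {ξ : E}
    (hξ : Submodule.span 𝕜 (Set.range fun k : Fin n => (N ^ (k : ℕ)) ξ) = ⊤) :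
    Submodule.span 𝕜 (Set.range fun k : Fin n => (N ^ (k : ℕ)) (U ξ)) = ⊤ := by
  have hcomp : (fun k : Fin n => (N ^ (k : ℕ)) (U ξ)) = U ∘ fun k : Fin n => (N ^ (k : ℕ)) ξ :=
    funext fun k => congr($((hUN.pow_right k).eq.symm) ξ)
  obtain ⟨V, hV⟩ := hU.exists_right_inv
  rw [hcomp, Set.range_comp, ← ContinuousLinearMap.coe_coe, Submodule.span_image, hξ,
    Submodule.map_top, LinearMap.range_eq_top]
  exact fun y => ⟨V y, congr($hV y)⟩

def correction (N : E →L[𝕜] E) (n : ℕ) (a : ℕ → 𝕜) : E →L[𝕜] E :=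
  1 - ∑ j ∈ range (n - 1), a j • N ^ (j + 1)

variable (N : E →L[𝕜] E) (n : ℕ) (a : ℕ → 𝕜)

theorem correction_apply (ξ : E) :
    correction N n a ξ = ξ - ∑ j ∈ range (n - 1), a j • (N ^ (j + 1)) ξ := by
  simp [correction]

theorem commute_correction : Commute (correction N n a) N :=
  (Commute.one_left N).sub_left <|
    .sum_left _ _ _ fun _ _ => (Commute.self_pow N _).symm.smul_left _

theorem isUnit_correction (hN : IsNilpotent N) : IsUnit (correction N n a) := by
  have hfactor :
      ∑ j ∈ range (n - 1), a j • N ^ (j + 1) = N * ∑ j ∈ range (n - 1), a j • N ^ j := by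
    simp only [mul_sum, mul_smul_comm, pow_succ']
  have hcomm : Commute N (∑ j ∈ range (n - 1), a j • N ^ j) :=
    .sum_right _ _ _ fun _ _ => (Commute.self_pow N _).smul_right _
  rw [correction, hfactor]
  exact (hcomm.isNilpotent_mul_right hN).isUnit_one_sub

theorem pow_apply_correction (k : ℕ) (ξ : E) :
    (N ^ k) (correction N n a ξ) =
      (N ^ k) ξ - ∑ j ∈ range (n - 1), a j • (N ^ (j + 1 + k)) ξ := by
  have hcomm : (N ^ k) (correction N n a ξ) = correction N n a ((N ^ k) ξ) :=
    congr($(((commute_correction N n a).pow_right k).eq.symm) ξ)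
  rw [hcomm, correction_apply]
  simp only [pow_add N _ k, mul_apply_eq_comp]

theorem pow_pred_apply_correction (hN : N ^ n = 0) (ξ : E) :
    (N ^ (n - 1)) (correction N n a ξ) = (N ^ (n - 1)) ξ := by
  rw [pow_apply_correction, sub_eq_self]
  refine sum_eq_zero fun j hj => ?_
  rw [pow_eq_zero_of_le (by simp at hj; omega) hN, zero_apply, smul_zero]

end Correction

theorem exists_inner_pow_apply_correction_eq_zero {𝕜 E : Type*} [RCLike 𝕜]
    [NormedAddCommGroup E] [InnerProductSpace 𝕜 E] {n : ℕ} {N : E →L[𝕜] E} (hN : N ^ n = 0) (ξ : E) :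
    ∃ a : ℕ → 𝕜, ∀ k < n - 1, ⟪(N ^ (n - 1)) ξ, (N ^ k) (correction N n a ξ)⟫_𝕜 = 0 := by
  by_cases hη : (N ^ (n - 1)) ξ = 0
  · exact ⟨0, fun k _ => by rw [hη, inner_zero_left]⟩
  obtain ⟨a, ha⟩ := exists_sum_range_mul_shift_eq (u := fun d => ⟪(N ^ (n - 1)) ξ, (N ^ d) ξ⟫_𝕜)
    (inner_self_ne_zero.2 hη)
    fun d hd => by rw [pow_eq_zero_of_le hd hN, zero_apply, inner_zero_right]
  refine ⟨a, fun k hk => ?_⟩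
  simp only [pow_apply_correction, inner_sub_right, inner_sum, inner_smul_right, ha k hk, sub_self]

theorem stmt_3_general {H : Type*} [NormedAddCommGroup H] [InnerProductSpace ℂ H]
    (n : ℕ)
    (N : H →L[ℂ] H) (hnilp : N ^ n = 0)
    (ξ : H) (hcyc : Submodule.span ℂ (Set.range fun k : Fin n => (N ^ (k : ℕ)) ξ) = ⊤) :
    ∃ a : ℕ → ℂ, ∃ ζ : H,
      ζ = ξ - ∑ j ∈ Finset.range (n - 1), a j • (N ^ (j + 1)) ξ ∧
      Submodule.span ℂ (Set.range fun k : Fin n => (N ^ (k : ℕ)) ζ) = ⊤ ∧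
      ∀ k, k < n - 1 → ⟪(N ^ (n - 1)) ζ, (N ^ k) ζ⟫_ℂ = 0 := by
  obtain ⟨a, horth⟩ := exists_inner_pow_apply_correction_eq_zero hnilp ξ
  refine ⟨a, correction N n a ξ, correction_apply N n a ξ, ?_, fun k hk => ?_⟩
  · exact span_range_pow_apply_eq_top_of_isUnit (isUnit_correction N n a ⟨n, hnilp⟩)
      (commute_correction N n a) hcyc
  · rw [pow_pred_apply_correction N n a hnilp]
    exact horth k hk

/-- a cyclic vector `ξ` of a nilpotent operator of order `n` may be
corrected by scalars `a_0, …, a_{n-2}` so that `ζ = ξ - Σ_{j=0}^{n-2} a_j N^{j+1} ξ`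
is cyclic and `N^{n-1}ζ ⟂ N^k ζ` for every `0 ≤ k ≤ n-2`. -/
theorem stmt_3 {H : Type*} [NormedAddCommGroup H] [InnerProductSpace ℂ H]
    [FiniteDimensional ℂ H] (n : ℕ) (hn : Module.finrank ℂ H = n)
    (N : H →L[ℂ] H) (hnilp : N ^ n = 0)
    (ξ : H) (hcyc : Submodule.span ℂ (Set.range fun k : Fin n => (N ^ (k : ℕ)) ξ) = ⊤) :
    ∃ a : ℕ → ℂ, ∃ ζ : H,
      ζ = ξ - ∑ j ∈ Finset.range (n - 1), a j • (N ^ (j + 1)) ξ ∧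
      Submodule.span ℂ (Set.range fun k : Fin n => (N ^ (k : ℕ)) ζ) = ⊤ ∧
      ∀ k, k < n - 1 → ⟪(N ^ (n - 1)) ζ, (N ^ k) ζ⟫_ℂ = 0 :=
  stmt_3_general n N hnilp ξ hcyc
end

section
/- Let (λ_j) be a Blaschke sequence of distinct points in 𝔻 that is NOT a Carleson sequence, i.e., inf_k Π_{j≠k} |(λ_j−λ_k)/(1−conj(λ_j)λ_k)| = 0. Then there exists an inner divisor u of the Blaschke product b = Π_j b_{λ_j} such that inf{|u(λ_j)| : u(λ_j) ≠ 0} = 0. -/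
/-!
Write `ρ j k = ‖b_{λ_j}(λ_k)‖` and `δ k = ∏_{j ≠ k} ρ j k`; the Blaschke condition makes every
`δ k` positive, while `inf_k δ k = 0`. If some `λ_m` is not separated from the other points, i.e.
`inf_{k ≠ m} ρ m k = 0`, the single factor `u = b_{λ_m}` does it. Otherwise `ρ m k ≥ e m > 0` for
all `k ≠ m`, and one picks inductively indices `k_n` and finite sets `F_n`, each avoiding all
indices chosen before, with `∏_{j ∈ F_n} ρ j k_n < 1/(n+1)`: take `k_n` with `δ k_n` tiny and a
long partial product for it; discarding the factors at the finitely many earlier indices `A`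
costs at most the factor `∏_{m ∈ A} e m`. Then `u = ∏_{j ∈ S} b_{λ_j}` with `S = ⋃ F_n` divides
`b`, does not vanish at any `λ_{k_n}` (as `k_n ∉ S`), and `‖u(λ_{k_n})‖ ≤ ∏_{j ∈ F_n} ρ j k_n`.
-/

open Metric

/-- The normalized Blaschke factor `b_λ(z) = (conj λ / |λ|) (λ - z)/(1 - conj λ · z)`
for `λ ≠ 0`, and `b_0(z) = z`. -/
noncomputable def blaschkeFactor (l z : ℂ) : ℂ :=
  if l = 0 then z else (starRingEnd ℂ l / (‖l‖ : ℂ)) * ((l - z) / (1 - starRingEnd ℂ l * z))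

/-- A function is inner-on-the-disc (for our purposes): holomorphic on the open unit
disc and bounded there by `1`. -/
def IsInnerOn (u : ℂ → ℂ) : Prop :=
  DifferentiableOn ℂ u (ball (0 : ℂ) 1) ∧ ∀ z ∈ ball (0 : ℂ) 1, ‖u z‖ ≤ 1

open Filter Finset Topology ComplexConjugate

section BlaschkeFactor

theorem norm_sq_one_sub_conj_mul_sub_norm_sq_sub (l z : ℂ) :
    ‖1 - conj l * z‖ ^ 2 - ‖l - z‖ ^ 2 = (1 - ‖l‖ ^ 2) * (1 - ‖z‖ ^ 2) := by
  simp only [Complex.sq_norm, Complex.normSq_apply, Complex.sub_re, Complex.sub_im,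
    Complex.one_re, Complex.one_im, Complex.mul_re, Complex.mul_im, Complex.conj_re,
    Complex.conj_im]
  ring

theorem one_sub_norm_mul_le_norm_one_sub_conj_mul (l z : ℂ) :
    1 - ‖l‖ * ‖z‖ ≤ ‖1 - conj l * z‖ := by
  simpa [norm_mul] using norm_sub_norm_le (1 : ℂ) (conj l * z)

variable {l z : ℂ}

theorem one_sub_conj_mul_ne_zero (hl : ‖l‖ < 1) (hz : ‖z‖ < 1) : 1 - conj l * z ≠ 0 := by
  rw [← norm_pos_iff]
  have := one_sub_norm_mul_le_norm_one_sub_conj_mul l z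
  nlinarith [norm_nonneg l, norm_nonneg z]

theorem norm_conj_div_norm (hl : l ≠ 0) : ‖conj l / (‖l‖ : ℂ)‖ = 1 := by
  rw [norm_div, Complex.norm_conj, Complex.norm_real, Real.norm_of_nonneg (norm_nonneg l),
    div_self (norm_ne_zero_iff.mpr hl)]

theorem norm_blaschkeFactor_le_one (hl : ‖l‖ < 1) (hz : ‖z‖ < 1) :
    ‖blaschkeFactor l z‖ ≤ 1 := by
  rw [blaschkeFactor]
  split_ifs with hl0
  · exact hz.le
  rw [norm_mul, norm_conj_div_norm hl0, one_mul, norm_div]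
  refine div_le_one_of_le₀ ?_ (norm_nonneg _)
  refine (pow_le_pow_iff_left₀ (norm_nonneg _) (norm_nonneg _) two_ne_zero).mp ?_
  have := norm_sq_one_sub_conj_mul_sub_norm_sq_sub l z
  have : 0 ≤ (1 - ‖l‖ ^ 2) * (1 - ‖z‖ ^ 2) := by
    apply mul_nonneg <;> nlinarith [norm_nonneg l, norm_nonneg z]
  linarith

theorem norm_blaschkeFactor_sub_one_le (hl : ‖l‖ < 1) (hz : ‖z‖ < 1) :
    ‖blaschkeFactor l z - 1‖ ≤ 2 / (1 - ‖z‖) * (1 - ‖l‖) := by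
  have hz' : 0 < 1 - ‖z‖ := by linarith
  rw [blaschkeFactor]
  split_ifs with hl0
  · rw [hl0, norm_zero, sub_zero, mul_one, le_div_iff₀ hz']
    nlinarith [norm_sub_le z 1, norm_one (α := ℂ), norm_nonneg z]
  have hl' : (0 : ℝ) < ‖l‖ := norm_pos_iff.mpr hl0
  have hd := one_sub_conj_mul_ne_zero hl hz
  have hlC : (‖l‖ : ℂ) ≠ 0 := Complex.ofReal_ne_zero.mpr hl'.ne'
  -- `conj l * l = ‖l‖ ^ 2` collapses the numerator to a multiple of `1 - ‖l‖`
  have key : conj l / (‖l‖ : ℂ) * ((l - z) / (1 - conj l * z)) - 1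
      = -((1 - ‖l‖ : ℝ) : ℂ) * (‖l‖ + conj l * z) / (‖l‖ * (1 - conj l * z)) := by
    have hll : conj l * l = (‖l‖ : ℂ) ^ 2 := by
      rw [Complex.conj_mul']
    field_simp
    push_cast
    linear_combination hll
  have hnum : ‖(‖l‖ : ℂ) + conj l * z‖ ≤ ‖l‖ * (1 + ‖z‖) := by
    calc _ ≤ ‖(‖l‖ : ℂ)‖ + ‖conj l * z‖ := norm_add_le _ _
      _ = ‖l‖ * (1 + ‖z‖) := by
        rw [norm_mul, Complex.norm_conj, Complex.norm_real, Real.norm_of_nonneg hl'.le]; ring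
  have hden : ‖l‖ * (1 - ‖z‖) ≤ ‖(‖l‖ : ℂ) * (1 - conj l * z)‖ := by
    rw [norm_mul, Complex.norm_real, Real.norm_of_nonneg hl'.le]
    have := one_sub_norm_mul_le_norm_one_sub_conj_mul l z
    have : ‖l‖ * ‖z‖ ≤ ‖z‖ := by nlinarith [norm_nonneg z]
    nlinarith
  rw [key, norm_div, norm_mul, norm_neg, Complex.norm_real, Real.norm_of_nonneg (by linarith)]
  calc (1 - ‖l‖) * ‖(‖l‖ : ℂ) + conj l * z‖ / ‖(‖l‖ : ℂ) * (1 - conj l * z)‖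
      ≤ (1 - ‖l‖) * (‖l‖ * (1 + ‖z‖)) / (‖l‖ * (1 - ‖z‖)) :=
        div_le_div₀ (mul_nonneg (by linarith) (by positivity)) (by gcongr) (by positivity) hden
    _ ≤ 2 / (1 - ‖z‖) * (1 - ‖l‖) := by
        rw [div_le_iff₀ (by positivity)]
        field_simp
        nlinarith [norm_nonneg z]

theorem differentiableOn_blaschkeFactor (hl : ‖l‖ < 1) :
    DifferentiableOn ℂ (blaschkeFactor l) (ball 0 1) := by
  unfold blaschkeFactor
  split_ifs
  · exact differentiableOn_id
  refine ((differentiableOn_const l).sub differentiableOn_id).div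
    ((differentiableOn_const 1).sub (differentiableOn_id.const_mul _)) ?_ |>.const_mul _
  exact fun z hz => one_sub_conj_mul_ne_zero hl (mem_ball_zero_iff.mp hz)

theorem blaschkeFactor_ne_zero (hl : ‖l‖ < 1) (hz : ‖z‖ < 1) (hlz : l ≠ z) :
    blaschkeFactor l z ≠ 0 := by
  unfold blaschkeFactor
  split_ifs with hl0
  · exact hl0 ▸ hlz.symm
  have hlC : (‖l‖ : ℂ) ≠ 0 := Complex.ofReal_ne_zero.mpr (norm_ne_zero_iff.mpr hl0)
  exact mul_ne_zero (div_ne_zero ((map_ne_zero _).mpr hl0) hlC)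
    (div_ne_zero (sub_ne_zero.mpr hlz) (one_sub_conj_mul_ne_zero hl hz))

end BlaschkeFactor

theorem tprod_le_prod_of_le_one {ι : Type*} {f : ι → ℝ} (h0 : ∀ i, 0 ≤ f i) (h1 : ∀ i, f i ≤ 1)
    (hf : Multipliable f) (s : Finset ι) : ∏' i, f i ≤ ∏ i ∈ s, f i := by
  classical
  refine le_of_tendsto hf.hasProd ?_
  filter_upwards [eventually_ge_atTop s] with t hst
  rw [← prod_sdiff hst]
  exact mul_le_of_le_one_left (prod_nonneg fun i _ => h0 i) (prod_le_one (fun i _ => h0 i)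
    fun i _ => h1 i)

section BlaschkeProduct

variable {ι : Type*} {lam : ι → ℂ}

theorem hasProdLocallyUniformlyOn_blaschkeFactor (hmem : ∀ i, ‖lam i‖ < 1)
    (hB : Summable fun i => 1 - ‖lam i‖) :
    HasProdLocallyUniformlyOn (fun i => blaschkeFactor (lam i))
      (fun z => ∏' i, blaschkeFactor (lam i) z) (ball 0 1) := by
  refine hasProdLocallyUniformlyOn_of_forall_compact isOpen_ball fun K hK1 hK => ?_
  obtain ⟨r, ⟨-, hr1⟩, hKr⟩ := exists_pos_lt_subset_ball one_pos hK.isClosed hK1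
  have hbound : ∀ i, ∀ z ∈ K, ‖blaschkeFactor (lam i) z - 1‖ ≤ 2 / (1 - r) * (1 - ‖lam i‖) := by
    intro i z hz
    have hzr : ‖z‖ < r := mem_ball_zero_iff.mp (hKr hz)
    refine (norm_blaschkeFactor_sub_one_le (hmem i) (hzr.trans hr1)).trans ?_
    gcongr
    linarith [norm_nonneg (lam i), hmem i]
  have hcont : ∀ i, ContinuousOn (fun z => blaschkeFactor (lam i) z - 1) K := fun i =>
    ((differentiableOn_blaschkeFactor (hmem i)).continuousOn.mono hK1).sub continuousOn_const
  simpa using Summable.hasProdUniformlyOn_one_add hK (hB.mul_left _)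
    (Eventually.of_forall hbound) hcont

theorem multipliable_blaschkeFactor (hmem : ∀ i, ‖lam i‖ < 1)
    (hB : Summable fun i => 1 - ‖lam i‖) {z : ℂ} (hz : z ∈ ball (0 : ℂ) 1) :
    Multipliable fun i => blaschkeFactor (lam i) z :=
  ((hasProdLocallyUniformlyOn_blaschkeFactor hmem hB).hasProd hz).multipliable

theorem norm_tprod_blaschkeFactor_le_prod (hmem : ∀ i, ‖lam i‖ < 1)
    (hB : Summable fun i => 1 - ‖lam i‖) {z : ℂ} (hz : z ∈ ball (0 : ℂ) 1) (s : Finset ι) :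
    ‖∏' i, blaschkeFactor (lam i) z‖ ≤ ∏ i ∈ s, ‖blaschkeFactor (lam i) z‖ := by
  have hz' := mem_ball_zero_iff.mp hz
  rw [(multipliable_blaschkeFactor hmem hB hz).norm_tprod]
  exact tprod_le_prod_of_le_one (fun i => norm_nonneg _)
    (fun i => norm_blaschkeFactor_le_one (hmem i) hz')
    (multipliable_blaschkeFactor hmem hB hz).norm s

theorem isInnerOn_tprod_blaschkeFactor (hmem : ∀ i, ‖lam i‖ < 1)
    (hB : Summable fun i => 1 - ‖lam i‖) :
    IsInnerOn fun z => ∏' i, blaschkeFactor (lam i) z := by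
  refine ⟨?_, fun z hz => by simpa using norm_tprod_blaschkeFactor_le_prod hmem hB hz ∅⟩
  refine (hasProdLocallyUniformlyOn_blaschkeFactor hmem hB).differentiableOn
    (Eventually.of_forall fun s => ?_) isOpen_ball
  exact DifferentiableOn.fun_finsetProd fun i _ => differentiableOn_blaschkeFactor (hmem i)

theorem tprod_blaschkeFactor_ne_zero (hmem : ∀ i, ‖lam i‖ < 1)
    (hB : Summable fun i => 1 - ‖lam i‖) {z : ℂ} (hz : z ∈ ball (0 : ℂ) 1)
    (hne : ∀ i, lam i ≠ z) : ∏' i, blaschkeFactor (lam i) z ≠ 0 := by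
  have hz' := mem_ball_zero_iff.mp hz
  have hsum : Summable fun i => ‖blaschkeFactor (lam i) z - 1‖ :=
    (hB.mul_left (2 / (1 - ‖z‖))).of_nonneg_of_le (fun i => norm_nonneg _)
      fun i => norm_blaschkeFactor_sub_one_le (hmem i) hz'
  simpa using tprod_one_add_ne_zero_of_summable
    (fun i => by simpa using blaschkeFactor_ne_zero (hmem i) hz' (hne i)) hsum

theorem tprod_blaschkeFactor_eq_mul_compl (hmem : ∀ i, ‖lam i‖ < 1)
    (hB : Summable fun i => 1 - ‖lam i‖) (S : Set ι) {z : ℂ} (hz : z ∈ ball (0 : ℂ) 1) :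
    ∏' i, blaschkeFactor (lam i) z
      = (∏' i : S, blaschkeFactor (lam i) z) * ∏' i : ↥Sᶜ, blaschkeFactor (lam i) z :=
  (Multipliable.tprod_mul_tprod_compl (f := fun i => blaschkeFactor (lam i) z)
    (multipliable_blaschkeFactor (lam := fun i : S => lam i) (fun i => hmem i) (hB.subtype S) hz)
    (multipliable_blaschkeFactor (lam := fun i : ↥Sᶜ => lam i) (fun i => hmem i) (hB.subtype Sᶜ)
      hz)).symm

theorem norm_tprod_subtype_blaschkeFactor_le_prod (hmem : ∀ i, ‖lam i‖ < 1)
    (hB : Summable fun i => 1 - ‖lam i‖) {z : ℂ} (hz : z ∈ ball (0 : ℂ) 1) {S : Set ι}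
    {s : Finset ι} (hs : ↑s ⊆ S) :
    ‖∏' i : S, blaschkeFactor (lam i) z‖ ≤ ∏ i ∈ s, ‖blaschkeFactor (lam i) z‖ := by
  classical
  calc ‖∏' i : S, blaschkeFactor (lam i) z‖
      ≤ ∏ i ∈ s.subtype (· ∈ S), ‖blaschkeFactor (lam i) z‖ :=
        norm_tprod_blaschkeFactor_le_prod (lam := fun i : S => lam i) (fun i => hmem i)
          (hB.subtype S) hz _
    _ = ∏ i ∈ s, ‖blaschkeFactor (lam i) z‖ := by
        rw [prod_subtype_eq_prod_filter (fun i => ‖blaschkeFactor (lam i) z‖),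
          filter_true_of_mem hs]

end BlaschkeProduct

section Selection

variable {α : Type*}

theorem exists_notMem_lt_of_pos {f : α → ℝ} (hpos : ∀ a, 0 < f a)
    (hinf : ∀ ε > 0, ∃ a, f a < ε) (A : Finset α) {ε : ℝ} (hε : 0 < ε) :
    ∃ a ∉ A, f a < ε := by
  classical
  set c := (insert ε (A.image f)).min' (insert_nonempty _ _)
  have hc : 0 < c := by
    simpa [c, Finset.lt_min'_iff, hε] using fun a _ => hpos a
  obtain ⟨a, ha⟩ := hinf c hc
  refine ⟨a, fun haA => ?_, ha.trans_le (min'_le _ _ (mem_insert_self _ _))⟩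
  exact ha.not_ge (min'_le _ _ (mem_insert_of_mem (mem_image_of_mem f haA)))

theorem exists_set_of_forall_finset [DecidableEq α] (P : ℕ → α → Finset α → Prop)
    (h : ∀ (A : Finset α) (n : ℕ), ∃ k ∉ A, ∃ F : Finset α, Disjoint F A ∧ k ∉ F ∧ P n k F) :
    ∃ S : Set α, ∀ n, ∃ k ∉ S, ∃ F : Finset α, ↑F ⊆ S ∧ P n k F := by
  choose k hkA F hFA hkF hP using h
  let A : ℕ → Finset α := fun n => Nat.rec ∅ (fun m Am => Am ∪ insert (k Am m) (F Am m)) n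
  have hA : Monotone A := monotone_nat_of_le_succ fun n => subset_union_left
  have hkA' : ∀ n, k (A n) n ∈ A (n + 1) := fun n =>
    mem_union_right _ (mem_insert_self _ _)
  have hFA' : ∀ n, F (A n) n ⊆ A (n + 1) := fun n =>
    (subset_insert _ _).trans subset_union_right
  refine ⟨⋃ n, ↑(F (A n) n), fun n => ⟨k (A n) n, ?_, F (A n) n,
    Set.subset_iUnion (fun m => (↑(F (A m) m) : Set α)) n, hP _ _⟩⟩
  simp only [Set.mem_iUnion, mem_coe, not_exists]
  intro m hm
  rcases lt_trichotomy m n with hmn | rfl | hnm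
  · exact hkA _ _ (hA hmn (hFA' m hm))
  · exact hkF _ _ hm
  · exact disjoint_left.mp (hFA _ _) hm (hA hnm (hkA' n))

variable {ρ : α → α → ℝ} {δ : α → ℝ}

theorem exists_finset_prod_lt_of_hasProd {k : α} {x η : ℝ}
    (h : HasProd (fun j : {j // j ≠ k} => ρ j k) x) (hx : x < η) (A : Finset α) (hkA : k ∉ A) :
    ∃ G : Finset α, A ⊆ G ∧ k ∉ G ∧ ∏ j ∈ G, ρ j k < η := by
  classical
  obtain ⟨G, hGη, hAG⟩ := ((h.eventually (gt_mem_nhds hx)).and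
    (eventually_ge_atTop (A.subtype (· ≠ k)))).exists
  refine ⟨G.map (Function.Embedding.subtype _), fun a ha => ?_, fun hk => ?_, ?_⟩
  · have hak : a ≠ k := fun hak => hkA (hak ▸ ha)
    exact mem_map_of_mem _ (hAG (mem_subtype.mpr ha) : (⟨a, hak⟩ : {j // j ≠ k}) ∈ G)
  · obtain ⟨j, -, hj⟩ := mem_map.mp hk
    exact j.2 hj
  · rwa [prod_map]

theorem exists_finset_prod_lt_of_separated [DecidableEq α]
    (hδ : ∀ k, HasProd (fun j : {j // j ≠ k} => ρ j k) (δ k)) (hδpos : ∀ k, 0 < δ k)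
    (hinf : ∀ ε > 0, ∃ k, δ k < ε) (hsep : ∀ m, ∃ e > 0, ∀ k ≠ m, e ≤ ρ m k)
    (A : Finset α) {ε : ℝ} (hε : 0 < ε) :
    ∃ k ∉ A, ∃ F : Finset α, Disjoint F A ∧ k ∉ F ∧ ∏ j ∈ F, ρ j k < ε := by
  choose e he hle using hsep
  have hc : 0 < ∏ m ∈ A, e m := prod_pos fun m _ => he m
  obtain ⟨k, hkA, hk⟩ := exists_notMem_lt_of_pos hδpos hinf A (mul_pos hε hc)
  obtain ⟨G, hAG, hkG, hG⟩ := exists_finset_prod_lt_of_hasProd (hδ k) hk A hkA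
  refine ⟨k, hkA, G \ A, sdiff_disjoint, fun hk => hkG (mem_sdiff.mp hk).1, ?_⟩
  have hsplit := prod_sdiff hAG (f := fun j => ρ j k)
  have hcA : ∏ m ∈ A, e m ≤ ∏ m ∈ A, ρ m k :=
    prod_le_prod (fun m _ => (he m).le) fun m hm => hle m k fun h => hkA (h ▸ hm)
  by_contra! hF
  nlinarith [mul_le_mul_of_nonneg_left hF hε.le]

theorem exists_set_forall_finset_prod_lt
    (hδ : ∀ k, HasProd (fun j : {j // j ≠ k} => ρ j k) (δ k)) (hδpos : ∀ k, 0 < δ k)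
    (hinf : ∀ ε > 0, ∃ k, δ k < ε) :
    ∃ S : Set α, ∀ ε > 0, ∃ k ∉ S, ∃ F : Finset α, ↑F ⊆ S ∧ ∏ j ∈ F, ρ j k < ε := by
  classical
  by_cases hsep : ∀ m, ∃ e > 0, ∀ k ≠ m, e ≤ ρ m k
  · obtain ⟨S, hS⟩ := exists_set_of_forall_finset (fun n k F => ∏ j ∈ F, ρ j k < 1 / (n + 1))
      fun A n => exists_finset_prod_lt_of_separated hδ hδpos hinf hsep A Nat.one_div_pos_of_nat
    refine ⟨S, fun ε hε => ?_⟩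
    obtain ⟨n, hn⟩ := exists_nat_one_div_lt hε
    obtain ⟨k, hkS, F, hFS, hF⟩ := hS n
    exact ⟨k, hkS, F, hFS, hF.trans hn⟩
  · push Not at hsep
    obtain ⟨m, hm⟩ := hsep
    refine ⟨{m}, fun ε hε => ?_⟩
    obtain ⟨k, hkm, hk⟩ := hm ε hε
    exact ⟨k, hkm, {m}, by simp, by simpa using hk⟩

end Selection

/-- if `(λ_j)` is a Blaschke sequence of distinct points of the disc
which is not a Carleson sequence, then the Blaschke product `b = Π_j b_{λ_j}` has an
inner divisor `u` with `inf { |u(λ_j)| : u(λ_j) ≠ 0 } = 0`. -/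
theorem stmt_10 (lam : ℕ → ℂ) (hmem : ∀ j, ‖lam j‖ < 1)
    (hdist : Function.Injective lam)
    (hBlaschke : Summable fun j => 1 - ‖lam j‖)
    (hnotCarleson : ∀ δ > (0 : ℝ), ∃ k : ℕ,
      (∏' j : {j : ℕ // j ≠ k}, ‖blaschkeFactor (lam j) (lam k)‖) < δ) :
    ∃ u v : ℂ → ℂ, IsInnerOn u ∧ IsInnerOn v ∧
      (∀ z ∈ ball (0 : ℂ) 1, (∏' j : ℕ, blaschkeFactor (lam j) z) = u z * v z) ∧
      ∀ ε > (0 : ℝ), ∃ j : ℕ, u (lam j) ≠ 0 ∧ ‖u (lam j)‖ < ε := by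
  have hmemb (k : ℕ) : lam k ∈ ball (0 : ℂ) 1 := mem_ball_zero_iff.mpr (hmem k)
  have hmult (k : ℕ) : Multipliable fun j : {j // j ≠ k} => blaschkeFactor (lam j) (lam k) :=
    multipliable_blaschkeFactor (lam := fun j : {j // j ≠ k} => lam j) (fun j => hmem j)
      (hBlaschke.subtype _) (hmemb k)
  have hδpos (k : ℕ) : 0 < ∏' j : {j : ℕ // j ≠ k}, ‖blaschkeFactor (lam j) (lam k)‖ := by
    rw [← (hmult k).norm_tprod, norm_pos_iff]
    exact tprod_blaschkeFactor_ne_zero (lam := fun j : {j // j ≠ k} => lam j) (fun j => hmem j)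
      (hBlaschke.subtype _) (hmemb k) fun j hj => j.2 (hdist hj)
  obtain ⟨S, hS⟩ := exists_set_forall_finset_prod_lt
    (ρ := fun j k => ‖blaschkeFactor (lam j) (lam k)‖) (fun k => (hmult k).norm.hasProd) hδpos
    hnotCarleson
  refine ⟨fun z => ∏' j : S, blaschkeFactor (lam j) z, fun z => ∏' j : ↥Sᶜ, blaschkeFactor (lam j) z,
    isInnerOn_tprod_blaschkeFactor (lam := fun j : S => lam j) (fun j => hmem j)
      (hBlaschke.subtype _),
    isInnerOn_tprod_blaschkeFactor (lam := fun j : ↥Sᶜ => lam j) (fun j => hmem j)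
      (hBlaschke.subtype _),
    fun z hz => tprod_blaschkeFactor_eq_mul_compl hmem hBlaschke S hz, fun ε hε => ?_⟩
  obtain ⟨k, hkS, F, hFS, hF⟩ := hS ε hε
  refine ⟨k, tprod_blaschkeFactor_ne_zero (lam := fun j : S => lam j) (fun j => hmem j)
    (hBlaschke.subtype _) (hmemb k)
    fun j hj => hkS (hdist hj ▸ j.2), ?_⟩
  exact (norm_tprod_subtype_blaschkeFactor_le_prod hmem hBlaschke (hmemb k) hFS).trans_lt hF
end

section
/- Let H be a Hilbert space, (H_j)_{j∈ℕ} closed subspaces with H = closed span of ∪_j H_j, and X ∈ B(H) invertible such that the subspaces XH_j are mutually orthogonal. Let H' = ⊕_j H_j be the external orthogonal direct sum with canonical inclusions ι_j : H_j → H'. Then the map X' : H' → H defined by X'(ι_j(x)) = Xx for x ∈ H_j extends to a bounded invertible operator from H' onto H. -/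
/-!
The images `X H_j` are closed, mutually orthogonal and have dense span, so `H` is their Hilbert
sum, i.e. isometric to `⊕ X H_j`. The restrictions `H_j ≃ X H_j` of `X` are isomorphisms with
norms bounded by `‖X‖` and inverse norms by `‖X⁻¹‖`, uniformly in `j`, so acting coordinatewise
they give an isomorphism `⊕ H_j ≃ ⊕ X H_j`. Composing the two yields `X'`.
-/

open scoped InnerProductSpace ENNReal

namespace lp

variable {𝕜 ι : Type*} [NontriviallyNormedField 𝕜] {E F : ι → Type*}
  [∀ i, NormedAddCommGroup (E i)] [∀ i, NormedSpace 𝕜 (E i)]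
  [∀ i, NormedAddCommGroup (F i)] [∀ i, NormedSpace 𝕜 (F i)] (p : ℝ≥0∞) [Fact (1 ≤ p)]

noncomputable def mapEquiv (e : ∀ i, E i ≃L[𝕜] F i) {C D : ℝ} (hC : 0 ≤ C) (hD : 0 ≤ D)
    (he : ∀ i, ‖(e i : E i →L[𝕜] F i)‖ ≤ C) (he' : ∀ i, ‖((e i).symm : F i →L[𝕜] E i)‖ ≤ D) :
    lp E p ≃L[𝕜] lp F p :=
  .equivOfInverse (mapCLM p _ hC he) (mapCLM p _ hD he')
    (fun f => by ext i; simp) (fun f => by ext i; simp)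

@[simp]
theorem mapEquiv_single [DecidableEq ι] (e : ∀ i, E i ≃L[𝕜] F i) {C D : ℝ} (hC : 0 ≤ C)
    (hD : 0 ≤ D) (he : ∀ i, ‖(e i : E i →L[𝕜] F i)‖ ≤ C)
    (he' : ∀ i, ‖((e i).symm : F i →L[𝕜] E i)‖ ≤ D) (i : ι) (x : E i) :
    mapEquiv p e hC hD he he' (lp.single p i x) = lp.single p i (e i x) := by
  ext j
  simpa [mapEquiv, lp.coeFn_single] using Pi.apply_single (fun j => e j) (fun j => map_zero _) i x j

end lp

namespace ContinuousLinearEquiv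

variable {𝕜 H E : Type*} [NontriviallyNormedField 𝕜] [NormedAddCommGroup H] [NormedSpace 𝕜 H]
  [NormedAddCommGroup E] [NormedSpace 𝕜 E]

theorem norm_submoduleMap_le (X : H ≃L[𝕜] E) (V : Submodule 𝕜 H) :
    ‖(X.submoduleMap V : V →L[𝕜] V.map (X : H →ₗ[𝕜] E))‖ ≤ ‖(X : H →L[𝕜] E)‖ :=
  ContinuousLinearMap.opNorm_le_bound _ (norm_nonneg _) fun x => (X : H →L[𝕜] E).le_opNorm x

theorem norm_submoduleMap_symm_le (X : H ≃L[𝕜] E) (V : Submodule 𝕜 H) :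
    ‖((X.submoduleMap V).symm : V.map (X : H →ₗ[𝕜] E) →L[𝕜] V)‖ ≤ ‖(X.symm : E →L[𝕜] H)‖ :=
  ContinuousLinearMap.opNorm_le_bound _ (norm_nonneg _) fun y => (X.symm : E →L[𝕜] H).le_opNorm y

end ContinuousLinearEquiv

section

variable {𝕜 ι H E : Type*} [RCLike 𝕜] [NormedAddCommGroup H] [NormedSpace 𝕜 H]
  [NormedAddCommGroup E] [InnerProductSpace 𝕜 E] [CompleteSpace E]

theorem isHilbertSum_map (V : ι → Submodule 𝕜 H) [∀ i, CompleteSpace (V i)]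
    (hV : (⨆ i, V i).topologicalClosure = ⊤) (X : H ≃L[𝕜] E)
    (horth : Pairwise fun i j => ∀ x ∈ V i, ∀ y ∈ V j, ⟪X x, X y⟫_𝕜 = 0) :
    IsHilbertSum 𝕜 (fun i => (V i).map (X : H →ₗ[𝕜] E))
      fun i => ((V i).map (X : H →ₗ[𝕜] E)).subtypeₗᵢ := by
  have (i : ι) : CompleteSpace ((V i).map (X : H →ₗ[𝕜] E)) :=
    (completeSpace_congr (e := (X.submoduleMap (V i)).toLinearEquiv.toEquiv)
      (X.submoduleMap (V i)).isUniformEmbedding).mp inferInstance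
  refine IsHilbertSum.mkInternal _ ?_ ?_
  · rintro i j hij ⟨_, x, hx, rfl⟩ ⟨_, y, hy, rfl⟩
    exact horth hij x hx y hy
  · rw [← Submodule.map_iSup, top_le_iff, ← Submodule.dense_iff_topologicalClosure_eq_top]
    exact X.surjective.denseRange.dense_image X.continuous
      (Submodule.dense_iff_topologicalClosure_eq_top.mpr hV)

theorem exists_continuousLinearEquiv_lp_of_orthogonal_image [DecidableEq ι]
    (V : ι → Submodule 𝕜 H) [∀ i, CompleteSpace (V i)]
    (hV : (⨆ i, V i).topologicalClosure = ⊤) (X : H ≃L[𝕜] E)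
    (horth : Pairwise fun i j => ∀ x ∈ V i, ∀ y ∈ V j, ⟪X x, X y⟫_𝕜 = 0) :
    ∃ X' : lp (fun i => V i) 2 ≃L[𝕜] E, ∀ i (x : V i), X' (lp.single 2 i x) = X x := by
  let coordinatewise := lp.mapEquiv 2 (fun i => X.submoduleMap (V i)) (norm_nonneg _)
    (norm_nonneg _) (fun i => X.norm_submoduleMap_le (V i))
    (fun i => X.norm_submoduleMap_symm_le (V i))
  refine ⟨coordinatewise.trans
    (isHilbertSum_map V hV X horth).linearIsometryEquiv.symm.toContinuousLinearEquiv, ?_⟩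
  intro i x
  simp [coordinatewise]

end

/-- if `(H_j)` are closed subspaces of a Hilbert space `H` whose union
has dense span, and `X` is a bounded invertible operator such that the subspaces
`X H_j` are mutually orthogonal, then the map `ι_j(x) ↦ X x` on the external
orthogonal direct sum `H' = ⊕_j H_j` extends to a bounded invertible operator from
`H'` onto `H`. -/
theorem stmt_16 {H : Type*} [NormedAddCommGroup H] [InnerProductSpace ℂ H]
    [CompleteSpace H] (Hj : ℕ → Submodule ℂ H)
    (hclosed : ∀ j, IsClosed (Hj j : Set H))
    (hdense : (Submodule.span ℂ (⋃ j, (Hj j : Set H))).topologicalClosure = ⊤)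
    (X : H ≃L[ℂ] H)
    (horth : ∀ j k, j ≠ k → ∀ x ∈ Hj j, ∀ y ∈ Hj k, ⟪X x, X y⟫_ℂ = 0) :
    ∃ X' : lp (fun j => ↥(Hj j)) 2 ≃L[ℂ] H,
      ∀ (j : ℕ) (x : Hj j), X' (lp.single 2 j x) = X (x : H) := by
  have (j : ℕ) : CompleteSpace (Hj j) := (hclosed j).completeSpace_coe
  rw [← Submodule.iSup_eq_span] at hdense
  exact exists_continuousLinearEquiv_lp_of_orthogonal_image Hj hdense X horth
end
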